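/- Let S be a (not necessarily commutative or bipotent) semiring with the following property: there is a function f : ℕ → ℕ such that for every finite subset X of S there exist a semiring F with at most f(|X|) elements and a semiring homomorphism φ : S → F such that for every x ∈ X and every s ∈ S, φ(s) = φ(x) implies s = x (each element of X occupies its own singleton kernel class). Then M_n(S) is strongly permutable for every n ∈ ℕ. -/

import Mathlib

set_option maxHeartbeats 1000000

universe u

/-! ### Semiring classes.

A *semiring* here is a nonempty set with an associative commutative addition and an
associative multiplication which distributes over addition on both sides; no zero or
identity element is assumed. -/

class PlainSemiring (S : Type u) extends Add S, Mul S where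
  nonempty' : Nonempty S
  add_assoc' : ∀ a b c : S, a + b + c = a + (b + c)
  add_comm' : ∀ a b : S, a + b = b + a
  mul_assoc' : ∀ a b c : S, a * b * c = a * (b * c)
  left_distrib' : ∀ a b c : S, a * (b + c) = a * b + a * c
  right_distrib' : ∀ a b c : S, (a + b) * c = a * c + b * c

/-- A bipotent semiring: `x + y` is always either `x` or `y`.
(The induced total order is given by `x ≤ y ↔ x + y = y`.) -/
class BipotentSemiring (S : Type u) extends PlainSemiring S where
  bipotent : ∀ a b : S, a + b = a ∨ a + b = b

/-- A commutative bipotent semiring. -/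
class CommBipotentSemiring (S : Type u) extends BipotentSemiring S where
  mul_comm' : ∀ a b : S, a * b = b * a

/-- `mpow a n` is the `(n+1)`-st power of `a`, so the set of positive powers of `a`
is exactly `Set.range (mpow a)`, and the multiplicative order of `a` is the
cardinality of `Set.range (mpow a)`. -/
def mpow {S : Type*} [Mul S] (a : S) : ℕ → S
  | 0 => a
  | n + 1 => mpow a n * a

lemma mpow_mul_mpow {S : Type*} [PlainSemiring S] (a : S) (m n : ℕ) :
    mpow a m * mpow a n = mpow a (m + n + 1) := by
  induction n with
  | zero => rfl
  | succ n ih =>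
    show mpow a m * (mpow a n * a) = mpow a (m + n + 1) * a
    rw [← PlainSemiring.mul_assoc', ih]

/-! ### Products of finite families, and permutability. -/

/-- Fold step used to define sums/products of possibly empty families in a structure
with no neutral element; the overall fold is `none` iff the family is empty. -/
def optStep {S : Type*} (op : S → S → S) : Option S → S → Option S :=
  fun acc x => some (acc.elim x (fun a => op a x))

/-- The sum `s 0 + s 1 + ⋯` of a finite family, as an `Option` (`none` iff `k = 0`). -/
def finSum {S : Type*} [Add S] {k : ℕ} (s : Fin k → S) : Option S :=
  (List.ofFn s).foldl (optStep (· + ·)) none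

/-- The product `s 0 * s 1 * ⋯` of a finite family, as an `Option` (`none` iff `k = 0`). -/
def finProd {S : Type*} [Mul S] {k : ℕ} (s : Fin k → S) : Option S :=
  (List.ofFn s).foldl (optStep (· * ·)) none

/-- A multiplicative structure is `k`-permutable if every product of `k` elements is
preserved by some non-identity permutation of its factors. -/
def KPermutable (S : Type*) [Mul S] (k : ℕ) : Prop :=
  ∀ s : Fin k → S, ∃ σ : Equiv.Perm (Fin k), σ ≠ Equiv.refl (Fin k) ∧
    finProd (fun i => s (σ i)) = finProd s

/-- A semigroup is strongly permutable if it is `k`-permutable for some `k ≥ 2`. -/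
def StronglyPermutable (S : Type*) [Mul S] : Prop :=
  ∃ k : ℕ, 2 ≤ k ∧ KPermutable S k

/-- A semigroup is weakly permutable if for some `k ≥ 2`, any product of `k` elements
is computed identically by two distinct permutations of its factors. -/
def WeaklyPermutable (S : Type*) [Mul S] : Prop :=
  ∃ k : ℕ, 2 ≤ k ∧ ∀ s : Fin k → S, ∃ σ τ : Equiv.Perm (Fin k), σ ≠ τ ∧
    finProd (fun i => s (σ i)) = finProd (fun i => s (τ i))

/-- Isomorphism of semirings (bijection preserving addition and multiplication). -/
def RingLikeIso (S T : Type*) [Add S] [Mul S] [Add T] [Mul T] : Prop :=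
  ∃ f : S → T, Function.Bijective f ∧ (∀ a b : S, f (a + b) = f a + f b) ∧
    (∀ a b : S, f (a * b) = f a * f b)

/-! ### Matrices. -/

/-- Square `n × n` matrices over `S`. -/
def MatSR (S : Type u) (n : ℕ) : Type u := Fin n → Fin n → S

/-- Matrix multiplication, `(A*B) i j = Σ_k (A i k * B k j)`.  (For `n ≥ 1` — the only
case of interest — the `getD` default value is never used.) -/
def matMul {S : Type*} [Add S] [Mul S] {n : ℕ} (A B : MatSR S n) : MatSR S n :=
  fun i j => (finSum (fun k : Fin n => A i k * B k j)).getD (A i j * B i j)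

/-- The multiplicative semigroup `M_n(S)`. -/
instance {S : Type*} [Add S] [Mul S] {n : ℕ} : Mul (MatSR S n) := ⟨matMul⟩

/-! ### `S⁰`: adjoining a zero, and upper triangular matrices. -/

/-- `S` with a zero (additively neutral, multiplicatively absorbing) element adjoined. -/
inductive Adj0 (S : Type u) : Type u
  | zero : Adj0 S
  | elem : S → Adj0 S

namespace Adj0

def add' {S : Type*} [Add S] : Adj0 S → Adj0 S → Adj0 S
  | .zero, b => b
  | .elem a, .zero => .elem a
  | .elem a, .elem b => .elem (a + b)

def mul' {S : Type*} [Mul S] : Adj0 S → Adj0 S → Adj0 S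
  | .zero, _ => .zero
  | .elem _, .zero => .zero
  | .elem a, .elem b => .elem (a * b)

instance {S : Type*} [Add S] : Add (Adj0 S) := ⟨add'⟩
instance {S : Type*} [Mul S] : Mul (Adj0 S) := ⟨mul'⟩

@[simp] lemma zero_add {S : Type*} [Add S] (b : Adj0 S) : (zero : Adj0 S) + b = b := rfl
@[simp] lemma add_zero {S : Type*} [Add S] (a : Adj0 S) : a + (zero : Adj0 S) = a := by
  cases a <;> rfl
@[simp] lemma elem_add_elem {S : Type*} [Add S] (a b : S) :
    (elem a : Adj0 S) + elem b = elem (a + b) := rfl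
@[simp] lemma zero_mul {S : Type*} [Mul S] (b : Adj0 S) : (zero : Adj0 S) * b = zero := rfl
@[simp] lemma mul_zero {S : Type*} [Mul S] (a : Adj0 S) : a * (zero : Adj0 S) = zero := by
  cases a <;> rfl
@[simp] lemma elem_mul_elem {S : Type*} [Mul S] (a b : S) :
    (elem a : Adj0 S) * elem b = elem (a * b) := rfl

lemma add_eq_zero_iff {S : Type*} [Add S] (a b : Adj0 S) :
    a + b = zero ↔ a = zero ∧ b = zero := by
  cases a <;> cases b <;> simp

end Adj0

lemma foldl_optStep_adj0 {S : Type*} [Add S] (l : List (Adj0 S)) (a : Adj0 S) :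
    ∃ c : Adj0 S, l.foldl (optStep (· + ·)) (some a) = some c ∧
      (c = Adj0.zero ↔ a = Adj0.zero ∧ ∀ x ∈ l, x = Adj0.zero) := by
  induction l generalizing a with
  | nil => exact ⟨a, rfl, by simp⟩
  | cons x l ih =>
    obtain ⟨c, hc, hiff⟩ := ih (a + x)
    refine ⟨c, ?_, ?_⟩
    · simpa [optStep] using hc
    · rw [hiff, Adj0.add_eq_zero_iff]
      simp only [List.mem_cons, forall_eq_or_imp]
      tauto

lemma finSum_adj0_eq_zero {S : Type*} [Add S] {n : ℕ} (f : Fin n → Adj0 S) (i : Fin n)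
    (d : Adj0 S) (h : ∀ k, f k = Adj0.zero) : (finSum f).getD d = Adj0.zero := by
  cases n with
  | zero => exact i.elim0
  | succ m =>
    rw [finSum, List.ofFn_succ, List.foldl_cons]
    obtain ⟨c, hc, hiff⟩ := foldl_optStep_adj0 (List.ofFn fun i : Fin m => f i.succ) (f 0)
    rw [show optStep (· + ·) none (f 0) = some (f 0) from rfl, hc]
    have : c = Adj0.zero := hiff.mpr ⟨h 0, by
      intro x hx
      rw [List.mem_ofFn] at hx
      obtain ⟨j, rfl⟩ := hx
      exact h _⟩
    simp [this]

lemma finSum_adj0_ne_zero {S : Type*} [Add S] {n : ℕ} (f : Fin n → Adj0 S) (i : Fin n)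
    (d : Adj0 S) (h : f i ≠ Adj0.zero) : (finSum f).getD d ≠ Adj0.zero := by
  cases n with
  | zero => exact i.elim0
  | succ m =>
    rw [finSum, List.ofFn_succ, List.foldl_cons]
    obtain ⟨c, hc, hiff⟩ := foldl_optStep_adj0 (List.ofFn fun i : Fin m => f i.succ) (f 0)
    rw [show optStep (· + ·) none (f 0) = some (f 0) from rfl, hc]
    simp only [Option.getD_some]
    intro hcz
    obtain ⟨h0, hall⟩ := hiff.mp hcz
    induction i using Fin.cases with
    | zero => exact h h0
    | succ j => exact h (hall _ (List.mem_ofFn.mpr ⟨j, rfl⟩))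

/-- Upper-triangularity over `S⁰`: entries strictly below the diagonal are the
adjoined zero; entries on and above the diagonal lie in `S`. -/
def IsUT {S : Type*} {n : ℕ} (A : MatSR (Adj0 S) n) : Prop :=
  (∀ i j : Fin n, (j : ℕ) < (i : ℕ) → A i j = Adj0.zero) ∧
  (∀ i j : Fin n, (i : ℕ) ≤ (j : ℕ) → ∃ s : S, A i j = Adj0.elem s)

lemma IsUT.mul {S : Type*} [Add S] [Mul S] {n : ℕ} {A B : MatSR (Adj0 S) n}
    (hA : IsUT A) (hB : IsUT B) : IsUT (matMul A B) := by
  constructor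
  · intro i j hji
    apply finSum_adj0_eq_zero _ i
    intro k
    rcases le_or_gt (i : ℕ) (k : ℕ) with h | h
    · rw [hB.1 k j (lt_of_lt_of_le hji h), Adj0.mul_zero]
    · rw [hA.1 i k h, Adj0.zero_mul]
  · intro i j hij
    have hne : matMul A B i j ≠ Adj0.zero := by
      apply finSum_adj0_ne_zero _ i
      obtain ⟨s, hs⟩ := hA.2 i i le_rfl
      obtain ⟨t, ht⟩ := hB.2 i j hij
      rw [hs, ht, Adj0.elem_mul_elem]
      simp
    cases hc : matMul A B i j with
    | zero => exact absurd hc hne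
    | elem s => exact ⟨s, rfl⟩

/-- The multiplicative semigroup `UT_n(S)` of upper triangular matrices over `S⁰`. -/
def UTMat (S : Type u) (n : ℕ) : Type u := {A : MatSR (Adj0 S) n // IsUT A}

instance {S : Type*} [Add S] [Mul S] {n : ℕ} : Mul (UTMat S n) :=
  ⟨fun A B => ⟨matMul A.1 B.1, A.2.mul B.2⟩⟩

/-! ### `S^{01}`: adjoining a zero and an identity, and unitriangular matrices. -/

/-- `S` with a zero and a multiplicative identity adjoined (`S^{01}` in the paper).
The sum of `one` and an `elem` is left undefined in the paper; it is given an
arbitrary value here, and never arises in products of unitriangular matrices. -/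
inductive Adj01 (S : Type u) : Type u
  | zero : Adj01 S
  | one : Adj01 S
  | elem : S → Adj01 S

namespace Adj01

def add' {S : Type*} [Add S] : Adj01 S → Adj01 S → Adj01 S
  | .zero, b => b
  | a, .zero => a
  | .one, .one => .one
  | .one, .elem b => .elem b
  | .elem a, .one => .elem a
  | .elem a, .elem b => .elem (a + b)

def mul' {S : Type*} [Mul S] : Adj01 S → Adj01 S → Adj01 S
  | .zero, _ => .zero
  | _, .zero => .zero
  | .one, b => b
  | a, .one => a
  | .elem a, .elem b => .elem (a * b)

instance {S : Type*} [Add S] : Add (Adj01 S) := ⟨add'⟩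
instance {S : Type*} [Mul S] : Mul (Adj01 S) := ⟨mul'⟩

@[simp] lemma zero_add {S : Type*} [Add S] (b : Adj01 S) : (zero : Adj01 S) + b = b := by
  cases b <;> rfl
@[simp] lemma add_zero {S : Type*} [Add S] (a : Adj01 S) : a + (zero : Adj01 S) = a := by
  cases a <;> rfl
@[simp] lemma one_add_one {S : Type*} [Add S] : (one : Adj01 S) + one = one := rfl
@[simp] lemma elem_add_elem {S : Type*} [Add S] (a b : S) :
    (elem a : Adj01 S) + elem b = elem (a + b) := rfl
@[simp] lemma one_add_elem {S : Type*} [Add S] (b : S) :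
    (one : Adj01 S) + elem b = elem b := rfl
@[simp] lemma elem_add_one {S : Type*} [Add S] (a : S) :
    (elem a : Adj01 S) + one = elem a := rfl
@[simp] lemma zero_mul {S : Type*} [Mul S] (b : Adj01 S) : (zero : Adj01 S) * b = zero := by
  cases b <;> rfl
@[simp] lemma mul_zero {S : Type*} [Mul S] (a : Adj01 S) : a * (zero : Adj01 S) = zero := by
  cases a <;> rfl
@[simp] lemma one_mul {S : Type*} [Mul S] (b : Adj01 S) : (one : Adj01 S) * b = b := by
  cases b <;> rfl
@[simp] lemma mul_one {S : Type*} [Mul S] (a : Adj01 S) : a * (one : Adj01 S) = a := by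
  cases a <;> rfl
@[simp] lemma elem_mul_elem {S : Type*} [Mul S] (a b : S) :
    (elem a : Adj01 S) * elem b = elem (a * b) := rfl

lemma mul_ne_one {S : Type*} [Mul S] {a b : Adj01 S} (ha : a ≠ one) (hb : b ≠ one) :
    a * b ≠ one := by
  cases a <;> cases b <;> simp_all

lemma add_ne_one {S : Type*} [Add S] {a b : Adj01 S} (ha : a ≠ one) (hb : b ≠ one) :
    a + b ≠ one := by
  cases a <;> cases b <;> simp_all

lemma add_01 {S : Type*} [Add S] {a b : Adj01 S} (ha : a = zero ∨ a = one)
    (hb : b = zero ∨ b = one) :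
    (a + b = zero ∨ a + b = one) ∧ (a + b = one ↔ a = one ∨ b = one) := by
  rcases ha with rfl | rfl <;> rcases hb with rfl | rfl <;> simp

end Adj01

lemma foldl_optStep_adj01 {S : Type*} [Add S] (l : List (Adj01 S)) (a : Adj01 S)
    (ha : a = Adj01.zero ∨ a = Adj01.one) (hl : ∀ x ∈ l, x = Adj01.zero ∨ x = Adj01.one) :
    ∃ c : Adj01 S, l.foldl (optStep (· + ·)) (some a) = some c ∧
      (c = Adj01.zero ∨ c = Adj01.one) ∧
      (c = Adj01.one ↔ a = Adj01.one ∨ ∃ x ∈ l, x = Adj01.one) := by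
  induction l generalizing a with
  | nil => exact ⟨a, rfl, ha, by simp⟩
  | cons x l ih =>
    have hx := hl x (by simp)
    have key := Adj01.add_01 ha hx
    obtain ⟨c, hc, hc01, hiff⟩ := ih (a + x) key.1 (fun y hy => hl y (by simp [hy]))
    refine ⟨c, by simpa [optStep] using hc, hc01, ?_⟩
    rw [hiff, key.2]
    simp only [List.mem_cons, exists_eq_or_imp]
    tauto

lemma foldl_optStep_adj01_ne_one {S : Type*} [Add S] (l : List (Adj01 S)) (a : Adj01 S)
    (ha : a ≠ Adj01.one) (hl : ∀ x ∈ l, x ≠ Adj01.one) :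
    ∃ c : Adj01 S, l.foldl (optStep (· + ·)) (some a) = some c ∧ c ≠ Adj01.one := by
  induction l generalizing a with
  | nil => exact ⟨a, rfl, ha⟩
  | cons x l ih =>
    have hax : a + x ≠ Adj01.one := Adj01.add_ne_one ha (hl x (by simp))
    obtain ⟨c, hc, hcne⟩ := ih (a + x) hax (fun y hy => hl y (by simp [hy]))
    exact ⟨c, by simpa [optStep] using hc, hcne⟩

lemma finSum_adj01_eq_one {S : Type*} [Add S] {n : ℕ} (f : Fin n → Adj01 S) (i : Fin n)
    (d : Adj01 S) (h01 : ∀ k, f k = Adj01.zero ∨ f k = Adj01.one) (hi : f i = Adj01.one) :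
    (finSum f).getD d = Adj01.one := by
  cases n with
  | zero => exact i.elim0
  | succ m =>
    rw [finSum, List.ofFn_succ, List.foldl_cons]
    obtain ⟨c, hc, _, hiff⟩ := foldl_optStep_adj01 (List.ofFn fun i : Fin m => f i.succ) (f 0)
      (h01 0) (by
        intro x hx
        rw [List.mem_ofFn] at hx
        obtain ⟨j, rfl⟩ := hx
        exact h01 _)
    rw [show optStep (· + ·) none (f 0) = some (f 0) from rfl, hc]
    simp only [Option.getD_some]
    apply hiff.mpr
    induction i using Fin.cases with
    | zero => exact Or.inl hi
    | succ j => exact Or.inr ⟨f j.succ, List.mem_ofFn.mpr ⟨j, rfl⟩, hi⟩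

lemma finSum_adj01_eq_zero {S : Type*} [Add S] {n : ℕ} (f : Fin n → Adj01 S) (i : Fin n)
    (d : Adj01 S) (h : ∀ k, f k = Adj01.zero) : (finSum f).getD d = Adj01.zero := by
  cases n with
  | zero => exact i.elim0
  | succ m =>
    rw [finSum, List.ofFn_succ, List.foldl_cons]
    obtain ⟨c, hc, hc01, hiff⟩ := foldl_optStep_adj01 (List.ofFn fun i : Fin m => f i.succ)
      (f 0) (Or.inl (h 0)) (by
        intro x hx
        rw [List.mem_ofFn] at hx
        obtain ⟨j, rfl⟩ := hx
        exact Or.inl (h _))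
    rw [show optStep (· + ·) none (f 0) = some (f 0) from rfl, hc]
    simp only [Option.getD_some]
    rcases hc01 with h' | h'
    · exact h'
    · exfalso
      rcases hiff.mp h' with h'' | ⟨x, hx, hx1⟩
      · rw [h 0] at h''; cases h''
      · rw [List.mem_ofFn] at hx
        obtain ⟨j, rfl⟩ := hx
        rw [h _] at hx1; cases hx1

lemma finSum_adj01_ne_one {S : Type*} [Add S] {n : ℕ} (f : Fin n → Adj01 S) (i : Fin n)
    (d : Adj01 S) (h : ∀ k, f k ≠ Adj01.one) : (finSum f).getD d ≠ Adj01.one := by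
  cases n with
  | zero => exact i.elim0
  | succ m =>
    rw [finSum, List.ofFn_succ, List.foldl_cons]
    obtain ⟨c, hc, hcne⟩ := foldl_optStep_adj01_ne_one (List.ofFn fun i : Fin m => f i.succ)
      (f 0) (h 0) (by
        intro x hx
        rw [List.mem_ofFn] at hx
        obtain ⟨j, rfl⟩ := hx
        exact h _)
    rw [show optStep (· + ·) none (f 0) = some (f 0) from rfl, hc]
    simpa using hcne

/-- Unitriangularity over `S^{01}`: the adjoined zero strictly below the diagonal, the
adjoined identity on the diagonal, and entries of `S⁰` (i.e. anything except the
adjoined identity) strictly above the diagonal. -/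
def IsU {S : Type*} {n : ℕ} (A : MatSR (Adj01 S) n) : Prop :=
  (∀ i j : Fin n, (j : ℕ) < (i : ℕ) → A i j = Adj01.zero) ∧
  (∀ i : Fin n, A i i = Adj01.one) ∧
  (∀ i j : Fin n, (i : ℕ) < (j : ℕ) → A i j ≠ Adj01.one)

lemma IsU.mul {S : Type*} [Add S] [Mul S] {n : ℕ} {A B : MatSR (Adj01 S) n}
    (hA : IsU A) (hB : IsU B) : IsU (matMul A B) := by
  refine ⟨?_, ?_, ?_⟩
  · intro i j hji
    apply finSum_adj01_eq_zero _ i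
    intro k
    rcases le_or_gt (i : ℕ) (k : ℕ) with h | h
    · rw [hB.1 k j (lt_of_lt_of_le hji h), Adj01.mul_zero]
    · rw [hA.1 i k h, Adj01.zero_mul]
  · intro i
    apply finSum_adj01_eq_one _ i
    · intro k
      rcases lt_trichotomy (k : ℕ) (i : ℕ) with h | h | h
      · rw [hA.1 i k h, Adj01.zero_mul]; exact Or.inl rfl
      · have : k = i := Fin.ext h
        subst this
        rw [hA.2.1 k, hB.2.1 k, Adj01.one_mul]; exact Or.inr rfl
      · rw [hB.1 k i h, Adj01.mul_zero]; exact Or.inl rfl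
    · rw [hA.2.1 i, hB.2.1 i, Adj01.one_mul]
  · intro i j hij
    apply finSum_adj01_ne_one _ i
    intro k
    rcases lt_trichotomy (k : ℕ) (i : ℕ) with h | h | h
    · rw [hA.1 i k h, Adj01.zero_mul]; exact fun h => by cases h
    · have : k = i := Fin.ext h
      subst this
      rw [hA.2.1 k, Adj01.one_mul]
      exact hB.2.2 k j (by omega)
    · rcases lt_trichotomy (k : ℕ) (j : ℕ) with h' | h' | h'
      · exact Adj01.mul_ne_one (hA.2.2 i k h) (hB.2.2 k j h')
      · have : k = j := Fin.ext h'
        subst this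
        rw [hB.2.1 k, Adj01.mul_one]
        exact hA.2.2 i k h
      · rw [hB.1 k j h', Adj01.mul_zero]; exact fun h => by cases h

/-- The multiplicative monoid `U_n(S)` of unitriangular matrices over `S^{01}`. -/
def UMat (S : Type u) (n : ℕ) : Type u := {A : MatSR (Adj01 S) n // IsU A}

instance {S : Type*} [Add S] [Mul S] {n : ℕ} : Mul (UMat S n) :=
  ⟨fun A B => ⟨matMul A.1 B.1, A.2.mul B.2⟩⟩

/-! ### Monogenic subsemirings. -/

/-- The carrier of the monogenic subsemiring `⟨a⟩` generated by `a` is the set of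
positive powers of `a`; in a bipotent semiring it is closed under addition. -/
instance genAdd {S : Type*} [BipotentSemiring S] (a : S) : Add ↥(Set.range (mpow a)) :=
  ⟨fun p q => ⟨p.1 + q.1, by
    rcases BipotentSemiring.bipotent p.1 q.1 with h | h <;> rw [h]
    exacts [p.2, q.2]⟩⟩

instance genMul {S : Type*} [BipotentSemiring S] (a : S) : Mul ↥(Set.range (mpow a)) :=
  ⟨fun p q => ⟨p.1 * q.1, by
    obtain ⟨m, hm⟩ := p.2
    obtain ⟨n, hn⟩ := q.2
    exact ⟨m + n + 1, by rw [← hm, ← hn, mpow_mul_mpow]⟩⟩⟩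

/-! ### Concrete bipotent semirings. -/

/-- The tropical semiring `ℕ_max` of positive natural numbers: addition is `max`,
multiplication is ordinary addition. -/
def NMax : Type := {n : ℕ // 0 < n}

instance : Add NMax := ⟨fun a b => ⟨max a.1 b.1, by have := a.2; have := b.2; omega⟩⟩
instance : Mul NMax := ⟨fun a b => ⟨a.1 + b.1, by have := a.2; have := b.2; omega⟩⟩

/-- The tropical semiring `(-ℕ)_max` of negative integers: addition is `max`,
multiplication is ordinary addition. -/
def NegNMax : Type := {z : ℤ // z < 0}

instance : Add NegNMax := ⟨fun a b => ⟨max a.1 b.1, by have := a.2; have := b.2; omega⟩⟩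
instance : Mul NegNMax := ⟨fun a b => ⟨a.1 + b.1, by have := a.2; have := b.2; omega⟩⟩

/-- The truncated tropical semiring `[k]_max` on `{1,…,k}`: addition is `max`,
multiplication is `a·b = min (a+b) k`. -/
def KMax (k : ℕ) : Type := {n : ℕ // 0 < n ∧ n ≤ k}

instance {k : ℕ} : Add (KMax k) :=
  ⟨fun a b => ⟨max a.1 b.1, by have := a.2; have := b.2; omega⟩⟩
instance {k : ℕ} : Mul (KMax k) :=
  ⟨fun a b => ⟨min (a.1 + b.1) k, by have := a.2; have := b.2; omega⟩⟩

/-- The truncated tropical semiring `[-k]_max` on `{-k,…,-1}`: addition is `max`,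
multiplication is `a·b = max (a+b) (-k)`. -/
def NegKMax (k : ℕ) : Type := {z : ℤ // -(k : ℤ) ≤ z ∧ z ≤ -1}

instance {k : ℕ} : Add (NegKMax k) :=
  ⟨fun a b => ⟨max a.1 b.1, by have := a.2; have := b.2; omega⟩⟩
instance {k : ℕ} : Mul (NegKMax k) :=
  ⟨fun a b => ⟨max (a.1 + b.1) (-(k : ℤ)), by have := a.2; have := b.2; omega⟩⟩

/-- The two-element boolean semifield `𝔹`: `{0,1}` with `0 < 1`, addition `max` (= "or")
and the usual multiplication (= "and"). -/
def BoolSR : Type := Bool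

instance : Add BoolSR := ⟨fun a b => (Bool.or a b : Bool)⟩
instance : Mul BoolSR := ⟨fun a b => (Bool.and a b : Bool)⟩

/-- A chain semiring: a linearly ordered set with addition `max` and multiplication `min`. -/
def ChainSR (L : Type u) [LinearOrder L] : Type u := L

instance {L : Type u} [LinearOrder L] : Add (ChainSR L) := ⟨fun a b => (max a b : L)⟩
instance {L : Type u} [LinearOrder L] : Mul (ChainSR L) := ⟨fun a b => (min a b : L)⟩

/-- The three-element commutative bipotent semiring of Proposition 1: order `A < B < C`
(addition is `max`), every element multiplicatively idempotent, and all products of two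
distinct elements equal to `B`. -/
inductive Three : Type
  | A : Three
  | B : Three
  | C : Three
deriving DecidableEq

instance instFintypeThree : Fintype Three :=
  ⟨{Three.A, Three.B, Three.C}, fun x => by cases x <;> simp⟩

def Three.add' : Three → Three → Three
  | .A, y => y
  | x, .A => x
  | .B, y => y
  | x, .B => x
  | .C, .C => .C

def Three.mul' : Three → Three → Three
  | .A, .A => .A
  | .B, .B => .B
  | .C, .C => .C
  | _, _ => .B

instance : Add Three := ⟨Three.add'⟩
instance : Mul Three := ⟨Three.mul'⟩

instance : CommBipotentSemiring Three where
  nonempty' := ⟨Three.A⟩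
  add_assoc' := by decide
  add_comm' := by decide
  mul_assoc' := by decide
  left_distrib' := by decide
  right_distrib' := by decide
  bipotent := by decide
  mul_comm' := by decide

/-- A bundled (possibly zero-less and identity-less) semiring, used to quantify over
semirings inside hypotheses. -/
structure BundledSemiring : Type 1 where
  carrier : Type
  add : carrier → carrier → carrier
  mul : carrier → carrier → carrier
  nonempty' : Nonempty carrier
  add_assoc' : ∀ a b c, add (add a b) c = add a (add b c)
  add_comm' : ∀ a b, add a b = add b a
  mul_assoc' : ∀ a b c, mul (mul a b) c = mul a (mul b c)
  left_distrib' : ∀ a b c, mul a (add b c) = add (mul a b) (mul a c)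
  right_distrib' : ∀ a b c, mul (add a b) c = add (mul a c) (mul b c)

/-! ### Semifields. -/

/-- `z` is a zero element: additively neutral and multiplicatively absorbing. -/
def IsZeroElem {S : Type*} [Add S] [Mul S] (z : S) : Prop :=
  ∀ x : S, z + x = x ∧ x + z = x ∧ z * x = z ∧ x * z = z

/-- `S` is a semifield: a commutative semiring, possibly without zero, whose set of
non-zero elements forms a group under multiplication (with identity `e`). -/
def IsSemifield (S : Type*) [Add S] [Mul S] : Prop :=
  ∃ e : S, ¬ IsZeroElem e ∧
    (∀ x : S, ¬ IsZeroElem x → e * x = x ∧ x * e = x) ∧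
    (∀ x y : S, ¬ IsZeroElem x → ¬ IsZeroElem y → ¬ IsZeroElem (x * y)) ∧
    (∀ x : S, ¬ IsZeroElem x → ∃ y : S, ¬ IsZeroElem y ∧ x * y = e ∧ y * x = e)

/-! ### Truncated tropical semirings. -/

/-- The underlying set `[x,y] ∪ {0}` of the truncated tropical semiring `𝕋_{[x,y]}`
(without the zero element `-∞`), for `0 ≤ x`.  Addition is `max`; multiplication is
`y`-truncated addition `a ⊗ b = min (a+b) y`, with the element `0` acting as the
multiplicative identity. -/
def TTb (x y : ℝ) (_hx : 0 ≤ x) : Type := {r : ℝ // r = 0 ∨ (x ≤ r ∧ r ≤ y)}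

namespace TTb

protected def add {x y : ℝ} {hx : 0 ≤ x} (a b : TTb x y hx) : TTb x y hx :=
  ⟨max a.1 b.1, by rcases max_choice a.1 b.1 with h | h <;> rw [h]
                   exacts [a.2, b.2]⟩

protected noncomputable def mul {x y : ℝ} {hx : 0 ≤ x} (a b : TTb x y hx) : TTb x y hx :=
  if ha : a.1 = 0 then b else if hb : b.1 = 0 then a else
    ⟨min (a.1 + b.1) y, by
      rcases a.2 with h | h
      · exact absurd h ha
      rcases b.2 with h' | h'
      · exact absurd h' hb
      right
      exact ⟨le_min (by linarith [h.1, h'.1]) (by linarith [h.1, h.2]), min_le_right _ _⟩⟩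

instance {x y : ℝ} {hx : 0 ≤ x} : Add (TTb x y hx) := ⟨TTb.add⟩
noncomputable instance {x y : ℝ} {hx : 0 ≤ x} : Mul (TTb x y hx) := ⟨TTb.mul⟩

end TTb

/-- The truncated tropical semiring `𝕋_{[x,y]}` (for `0 ≤ x < y`): the real interval
`[x,y]` together with a multiplicative identity `0` and a zero `-∞`, with addition
`max` and multiplication the `y`-truncated addition `a ⊗ b = min (a+b) y`. -/
abbrev TT (x y : ℝ) (hx : 0 ≤ x) : Type := Adj0 (TTb x y hx)

/-- The multiplicative identity `0` of `𝕋_{[x,y]}`. -/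
noncomputable def ttId (x y : ℝ) (hx : 0 ≤ x) : TT x y hx := Adj0.elem ⟨0, Or.inl rfl⟩

lemma ttId_mul {x y : ℝ} {hx : 0 ≤ x} (b : TT x y hx) : ttId x y hx * b = b := by
  cases b with
  | zero => rfl
  | elem e =>
    show Adj0.elem (TTb.mul ⟨0, Or.inl rfl⟩ e) = Adj0.elem e
    unfold TTb.mul
    exact congrArg Adj0.elem (dif_pos rfl)

/-- The subsemigroup `S` of `M_2(𝕋_{[1,z]})` of matrices of the form `[[0,a],[-∞,b]]`. -/
noncomputable def UpperS (z : ℝ) (hz : (0:ℝ) ≤ 1) : Type :=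
  {A : MatSR (TT 1 z hz) 2 // A 0 0 = ttId 1 z hz ∧ A 1 0 = Adj0.zero}

/-- The subsemigroup `S'` of `M_2(𝕋_{[1,z]})` of matrices of the form `[[0,-∞],[a,b]]`. -/
noncomputable def LowerS (z : ℝ) (hz : (0:ℝ) ≤ 1) : Type :=
  {A : MatSR (TT 1 z hz) 2 // A 0 0 = ttId 1 z hz ∧ A 0 1 = Adj0.zero}

noncomputable instance {z : ℝ} {hz : (0:ℝ) ≤ 1} : Mul (UpperS z hz) :=
  ⟨fun A B => ⟨A.1 * B.1, by
    obtain ⟨hA1, hA2⟩ := A.2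
    obtain ⟨hB1, hB2⟩ := B.2
    constructor
    · show A.1 0 0 * B.1 0 0 + A.1 0 1 * B.1 1 0 = ttId 1 z hz
      rw [hA1, hB1, hB2, ttId_mul, Adj0.mul_zero, Adj0.add_zero]
    · show A.1 1 0 * B.1 0 0 + A.1 1 1 * B.1 1 0 = Adj0.zero
      rw [hA2, hB2, Adj0.zero_mul, Adj0.mul_zero, Adj0.add_zero]⟩⟩

noncomputable instance {z : ℝ} {hz : (0:ℝ) ≤ 1} : Mul (LowerS z hz) :=
  ⟨fun A B => ⟨A.1 * B.1, by
    obtain ⟨hA1, hA2⟩ := A.2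
    obtain ⟨hB1, hB2⟩ := B.2
    constructor
    · show A.1 0 0 * B.1 0 0 + A.1 0 1 * B.1 1 0 = ttId 1 z hz
      rw [hA1, hB1, hA2, ttId_mul, Adj0.zero_mul, Adj0.add_zero]
    · show A.1 0 0 * B.1 0 1 + A.1 0 1 * B.1 1 1 = Adj0.zero
      rw [hA1, hB2, hA2, ttId_mul, Adj0.zero_mul, Adj0.add_zero]⟩⟩


/-! Send the factors entrywise into `M_n(F)`, where `F` is a finite semiring in which the
entries of the product `P` have singleton kernel classes; `|M_n(F)|` is bounded in terms of `n`
alone. Multiplying the images from left to right is a walk through finitely many partial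
products, so once there are at least `2 |M_n(F)| + 2` factors, the pigeonhole principle gives
three prefixes `a < b < c` with the same partial product. The blocks `[a, b)` and `[b, c)` then
both return the walk to that state, so exchanging them does not change the image of the product,
and the kernel condition lifts this equality back to `P`. -/

lemma List.foldl_optStep_some {T : Type*} (op : T → T → T) (l : List T) (a : T) :
    l.foldl (optStep op) (some a) = some (l.foldl op a) :=
  List.foldl_hom some fun _ _ => rfl

lemma List.foldl_optStep_map {T U : Type*} {op : T → T → T} {op' : U → U → U} (φ : T → U)
    (hφ : ∀ x y : T, φ (op x y) = op' (φ x) (φ y)) (l : List T) (o : Option T) :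
    (l.map φ).foldl (optStep op') (o.map φ) = (l.foldl (optStep op) o).map φ := by
  rw [List.foldl_map]
  refine List.foldl_hom (Option.map φ) fun o x => ?_
  cases o <;> simp [optStep, hφ]

lemma finSum_map {T U : Type*} [Add T] [Add U] (φ : T → U)
    (hφ : ∀ x y : T, φ (x + y) = φ x + φ y) {k : ℕ} (s : Fin k → T) :
    finSum (fun i => φ (s i)) = (finSum s).map φ := by
  rw [finSum, finSum, ← List.foldl_optStep_map φ hφ, List.map_ofFn]
  rfl

lemma finProd_map {T U : Type*} [Mul T] [Mul U] (φ : T → U)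
    (hφ : ∀ x y : T, φ (x * y) = φ x * φ y) {k : ℕ} (s : Fin k → T) :
    finProd (fun i => φ (s i)) = (finProd s).map φ := by
  rw [finProd, finProd, ← List.foldl_optStep_map φ hφ, List.map_ofFn]
  rfl

lemma finProd_eq_some {T : Type*} [Mul T] {k : ℕ} (hk : 0 < k) (s : Fin k → T) :
    ∃ P, finProd s = some P := by
  obtain ⟨k, rfl⟩ := Nat.exists_eq_add_one_of_ne_zero hk.ne'
  rw [finProd, List.ofFn_succ, List.foldl_cons]
  exact ⟨_, List.foldl_optStep_some _ _ _⟩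

namespace MatSR

def map {S T : Type*} (φ : S → T) {n : ℕ} (A : MatSR S n) : MatSR T n := fun i j => φ (A i j)

lemma map_mul {S T : Type*} [Add S] [Mul S] [Add T] [Mul T] (φ : S → T)
    (hadd : ∀ a b : S, φ (a + b) = φ a + φ b) (hmul : ∀ a b : S, φ (a * b) = φ a * φ b)
    {n : ℕ} (A B : MatSR S n) : (A * B).map φ = A.map φ * B.map φ := by
  funext i j
  change φ ((finSum fun k => A i k * B k j).getD (A i j * B i j))
    = (finSum fun k => φ (A i k) * φ (B k j)).getD (φ (A i j) * φ (B i j))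
  simp only [← hmul]
  rw [finSum_map φ hadd, Option.getD_map]

instance {S : Type*} [Finite S] {n : ℕ} : Finite (MatSR S n) :=
  inferInstanceAs (Finite (Fin n → Fin n → S))

lemma card_eq (S : Type*) (n : ℕ) : Nat.card (MatSR S n) = Nat.card S ^ (n * n) := by
  change Nat.card (Fin n → Fin n → S) = _
  rw [Nat.card_fun, Nat.card_fun, Nat.card_fin, ← pow_mul]

end MatSR

/-- Position `i` of the sequence with the adjacent blocks `[a, a + p)` and `[a + p, a + p + r)`
exchanged holds the entry at position `blockSwap a p r i` of the original sequence. -/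
def blockSwap (a p r i : ℕ) : ℕ :=
  if i < a then i else if i < a + r then i + p else if i < a + p + r then i - r else i

lemma blockSwap_blockSwap (a p r i : ℕ) : blockSwap a p r (blockSwap a r p i) = i := by
  unfold blockSwap
  split_ifs <;> omega

lemma blockSwap_lt {a p r k i : ℕ} (h : a + p + r ≤ k) (hi : i < k) : blockSwap a p r i < k := by
  unfold blockSwap
  split_ifs <;> omega

def Fin.blockSwap {k : ℕ} (a p r : ℕ) (h : a + p + r ≤ k) : Equiv.Perm (Fin k) where
  toFun i := ⟨_root_.blockSwap a p r i, blockSwap_lt h i.2⟩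
  invFun i := ⟨_root_.blockSwap a r p i, blockSwap_lt (by omega) i.2⟩
  left_inv i := Fin.ext (blockSwap_blockSwap a r p i)
  right_inv i := Fin.ext (blockSwap_blockSwap a p r i)

lemma Fin.blockSwap_ne_refl {k a p r : ℕ} (h : a + p + r ≤ k) (hp : 0 < p) (hr : 0 < r) :
    Fin.blockSwap a p r h ≠ Equiv.refl (Fin k) := by
  intro hσ
  have := congrArg (fun σ : Equiv.Perm (Fin k) => (σ ⟨a, by omega⟩ : ℕ)) hσ
  simp only [Fin.blockSwap, _root_.blockSwap, Equiv.coe_fn_mk, Equiv.refl_apply] at this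
  split_ifs at this <;> omega

lemma List.ofFn_comp_blockSwap {α : Type*} {k a p r : ℕ} (h : a + p + r ≤ k) (u : Fin k → α) :
    List.ofFn (fun i => u (Fin.blockSwap a p r h i)) =
      (List.ofFn u).take a ++ ((List.ofFn u).drop (a + p)).take r ++
        ((List.ofFn u).drop a).take p ++ (List.ofFn u).drop (a + p + r) := by
  refine List.ext_getElem (by simp; omega) fun i hi _ => ?_
  simp only [List.getElem_append, List.getElem_take, List.getElem_drop, List.getElem_ofFn,
    List.length_append, List.length_take, List.length_drop, List.length_ofFn]
  split_ifs <;>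
  · congr 1
    ext
    simp only [Fin.blockSwap, Equiv.coe_fn_mk, _root_.blockSwap]
    split_ifs <;> omega

lemma foldl_ofFn_comp_blockSwap {Q α : Type*} (g : Q → α → Q) (q₀ : Q) {k a p r : ℕ}
    (h : a + p + r ≤ k) (u : Fin k → α)
    (hp : ((List.ofFn u).take (a + p)).foldl g q₀ = ((List.ofFn u).take a).foldl g q₀)
    (hr : ((List.ofFn u).take (a + p + r)).foldl g q₀ = ((List.ofFn u).take a).foldl g q₀) :
    (List.ofFn (fun i => u (Fin.blockSwap a p r h i))).foldl g q₀
      = (List.ofFn u).foldl g q₀ := by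
  rw [List.take_add, List.take_add, List.foldl_append, List.foldl_append] at hr
  rw [List.take_add, List.foldl_append] at hp
  rw [hp] at hr
  conv_rhs => rw [← List.take_append_drop (a + p + r) (List.ofFn u), List.take_add, List.take_add]
  rw [List.ofFn_comp_blockSwap]
  simp only [List.foldl_append, hp, hr]

lemma exists_lt_lt_eq_eq_of_two_mul_card_lt {β : Type*} [Finite β] {m : ℕ} (f : Fin m → β)
    (h : 2 * Nat.card β < m) : ∃ x y z : Fin m, x < y ∧ y < z ∧ f y = f x ∧ f z = f x := by
  classical
  have := Fintype.ofFinite β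
  obtain ⟨b, hb⟩ := Fintype.exists_lt_card_fiber_of_mul_lt_card f (n := 2)
    (by simpa [Nat.card_eq_fintype_card, mul_comm] using h)
  set s := Finset.univ.filter fun x => f x = b
  have hf (i : Fin s.card) : f (s.orderEmbOfFin rfl i) = b :=
    (Finset.mem_filter.mp (s.orderEmbOfFin_mem rfl i)).2
  refine ⟨s.orderEmbOfFin rfl ⟨0, by omega⟩, s.orderEmbOfFin rfl ⟨1, by omega⟩,
    s.orderEmbOfFin rfl ⟨2, by omega⟩, (s.orderEmbOfFin rfl).strictMono (by simp),
    (s.orderEmbOfFin rfl).strictMono (by simp), by rw [hf, hf], by rw [hf, hf]⟩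

theorem exists_perm_foldl_ofFn_eq {Q α : Type*} [Finite Q] (g : Q → α → Q) (q₀ : Q) {k : ℕ}
    (hk : 2 * Nat.card Q < k + 1) (u : Fin k → α) :
    ∃ σ : Equiv.Perm (Fin k), σ ≠ Equiv.refl (Fin k) ∧
      (List.ofFn (fun i => u (σ i))).foldl g q₀ = (List.ofFn u).foldl g q₀ := by
  obtain ⟨a, b, c, hab, hbc, hb, hc⟩ := exists_lt_lt_eq_eq_of_two_mul_card_lt
    (fun j : Fin (k + 1) => ((List.ofFn u).take j).foldl g q₀) hk
  have h : a + (b - a) + (c - b : ℕ) ≤ k := by omega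
  refine ⟨Fin.blockSwap a (b - a) (c - b) h, Fin.blockSwap_ne_refl h (by omega) (by omega),
    foldl_ofFn_comp_blockSwap g q₀ h u ?_ ?_⟩
  · rwa [show a + (b - a : ℕ) = b by omega]
  · rwa [show a + (b - a) + (c - b : ℕ) = c by omega]

theorem exists_perm_finProd_map_eq {M T : Type*} [Mul M] [Mul T] [Finite T] (Ψ : M → T)
    (hΨ : ∀ A B : M, Ψ (A * B) = Ψ A * Ψ B) {k : ℕ} (hk : 2 * (Nat.card T + 1) ≤ k)
    (s : Fin k → M) :
    ∃ σ : Equiv.Perm (Fin k), σ ≠ Equiv.refl (Fin k) ∧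
      (finProd fun i => s (σ i)).map Ψ = (finProd s).map Ψ := by
  obtain ⟨σ, hσ, h⟩ := exists_perm_foldl_ofFn_eq (optStep (· * ·)) none
    (by rwa [Finite.card_option, Nat.lt_succ_iff]) fun i => Ψ (s i)
  exact ⟨σ, hσ, by rw [← finProd_map Ψ hΨ, ← finProd_map Ψ hΨ]; exact h⟩

/-- let `S` be a (not necessarily commutative or bipotent) semiring such
that, for some function `f : ℕ → ℕ`, every finite subset `X` of `S` admits a semiring
homomorphism `φ` from `S` to a finite semiring of cardinality at most `f |X|` under
which each element of `X` occupies its own singleton kernel class. Then `M_n(S)` is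
strongly permutable for every `n`. -/
theorem stmt_12 {S : Type*} [PlainSemiring S]
    (h : ∃ f : ℕ → ℕ, ∀ X : Finset S, ∃ (F : BundledSemiring) (φ : S → F.carrier),
      Finite F.carrier ∧ Nat.card F.carrier ≤ f X.card ∧
      (∀ a b : S, φ (a + b) = F.add (φ a) (φ b)) ∧
      (∀ a b : S, φ (a * b) = F.mul (φ a) (φ b)) ∧
      (∀ x ∈ X, ∀ s : S, φ s = φ x → s = x)) :
    ∀ n : ℕ, 0 < n → StronglyPermutable (MatSR S n) := by
  classical
  obtain ⟨f, hf⟩ := h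
  intro n _
  set m := (Finset.range (n * n + 1)).sup f
  refine ⟨2 * (m ^ (n * n) + 1), by omega, fun s => ?_⟩
  obtain ⟨P, hP⟩ := finProd_eq_some (by omega) s
  set X := Finset.univ.image fun ij : Fin n × Fin n => P ij.1 ij.2
  obtain ⟨F, φ, hF, hcard, hadd, hmul, hker⟩ := hf X
  let : Add F.carrier := ⟨F.add⟩
  let : Mul F.carrier := ⟨F.mul⟩
  have hX : X.card ≤ n * n := Finset.card_image_le.trans (by simp)
  have hFm : Nat.card F.carrier ≤ m :=
    hcard.trans (Finset.le_sup (Finset.mem_range.mpr (by omega)))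
  obtain ⟨σ, hσ, heq⟩ := exists_perm_finProd_map_eq (MatSR.map φ) (MatSR.map_mul φ hadd hmul)
    (by rw [MatSR.card_eq]; gcongr) s
  refine ⟨σ, hσ, ?_⟩
  rw [hP, Option.map_some, Option.map_eq_some_iff] at heq
  obtain ⟨P', hP', hφ⟩ := heq
  rw [hP', hP]
  congr
  funext i j
  exact hker _ (Finset.mem_image_of_mem _ (Finset.mem_univ (i, j))) _ (congrFun (congrFun hφ i) j)
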